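/- arXiv:2205.13634 — 9 statements merged into one kernel-verified Lean document; each statement's English description precedes it below -/
import Mathlib

section
/- Let d ≥ 1, K ≥ 1, 0 ≤ s ≤ d, and fix x, x̃ ∈ Fin d → Fin (K+1) with Hamming distance exactly s. Let ρ ∈ (0,1], γ = (1-ρ)/K, and assign to each x' the probability p(x') = γ^{dist(x',x)} ρ^{d - dist(x',x)}. Then the expected value of (dist(x', x̃) - dist(x', x)), where x' is drawn according to p, equals (ρ - γ)·s. -/
/-!
The weight `γ ^ dist(x', x) * ρ ^ (d - dist(x', x))` is the product over coordinates of the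
one-letter weights `w_i(a) = if a = x i then ρ else γ`, each summing to `ρ + K γ = 1`. The distance
difference is a sum of one-coordinate terms `[x'_j ≠ x̃_j] - [x'_j ≠ x_j] = [x'_j = x_j] - [x'_j = x̃_j]`,
so by linearity its expectation is `∑ j, (w_j(x_j) - w_j(x̃_j))`, and the `j`-th term is `ρ - γ`
if `x_j ≠ x̃_j` and `0` otherwise.
-/

open Finset

section
variable {ι : Type*} [Fintype ι] [DecidableEq ι] {κ : ι → Type*} {R : Type*} [CommSemiring R]

theorem Fintype.prod_update_apply (w : ∀ i, κ i → R) (j : ι) (v : κ j → R) (x : ∀ i, κ i) :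
    ∏ i, Function.update w j v i (x i) = v (x j) * ∏ i ∈ univ.erase j, w i (x i) := by
  rw [← mul_prod_erase univ _ (mem_univ j), Function.update_self]
  congr 1
  refine Finset.prod_congr rfl fun i hi => ?_
  rw [Function.update_of_ne (ne_of_mem_erase hi)]

variable [∀ i, Fintype (κ i)]

theorem Fintype.sum_prod_mul_apply (w : ∀ i, κ i → R) (hw : ∀ i, ∑ a, w i a = 1) (j : ι)
    (g : κ j → R) :
    ∑ x : ∀ i, κ i, (∏ i, w i (x i)) * g (x j) = ∑ a, w j a * g a := by
  let v := Function.update w j fun a => w j a * g a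
  have hv : ∀ x : ∀ i, κ i, ∏ i, v i (x i) = (∏ i, w i (x i)) * g (x j) := fun x => by
    rw [Fintype.prod_update_apply, ← mul_prod_erase univ _ (mem_univ j)]
    ring
  have hv_ne : ∏ i ∈ univ.erase j, ∑ a, v i a = 1 := Finset.prod_eq_one fun i hi => by
    simp only [v, Function.update_of_ne (ne_of_mem_erase hi), hw]
  calc ∑ x : ∀ i, κ i, (∏ i, w i (x i)) * g (x j)
      = ∏ i, ∑ a, v i a := by simp_rw [Fintype.prod_sum, hv]
    _ = ∑ a, w j a * g a := by
      rw [← mul_prod_erase univ _ (mem_univ j), hv_ne, mul_one]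
      simp only [v, Function.update_self]

theorem Fintype.sum_prod_mul_sum_apply (w : ∀ i, κ i → R) (hw : ∀ i, ∑ a, w i a = 1)
    (g : ∀ i, κ i → R) :
    ∑ x : ∀ i, κ i, (∏ i, w i (x i)) * ∑ j, g j (x j) = ∑ j, ∑ a, w j a * g j a := by
  simp_rw [mul_sum]
  rw [sum_comm]
  exact Finset.sum_congr rfl fun j _ => Fintype.sum_prod_mul_apply w hw j (g j)
end

theorem prod_ite_eq_eq_pow_hammingDist {ι : Type*} [Fintype ι] {β : ι → Type*}
    [∀ i, DecidableEq (β i)] {M : Type*} [CommMonoid M] (x y : ∀ i, β i) (a b : M) :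
    ∏ i, (if x i = y i then a else b) =
      b ^ hammingDist x y * a ^ (Fintype.card ι - hammingDist x y) := by
  have hcard := card_filter_add_card_filter_not (s := univ) (p := fun i => x i = y i)
  have hne : #{i | ¬x i = y i} = hammingDist x y := rfl
  rw [card_univ] at hcard
  rw [prod_ite, prod_const, prod_const, mul_comm, hne]
  congr 2
  omega

theorem natCast_hammingDist {ι : Type*} [Fintype ι] {β : ι → Type*}
    [∀ i, DecidableEq (β i)] {R : Type*} [AddCommMonoidWithOne R] (x y : ∀ i, β i) :
    (hammingDist x y : R) = ∑ i, if x i ≠ y i then 1 else 0 :=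
  natCast_card_filter _ _

theorem sum_mul_boole_ne_sub {α : Type*} [Fintype α] [DecidableEq α] {R : Type*} [CommRing R]
    (w : α → R) (x y : α) :
    ∑ a, w a * ((if a ≠ y then 1 else 0) - (if a ≠ x then 1 else 0)) = w x - w y := by
  have h : ∀ a, ((if a ≠ y then 1 else 0) - (if a ≠ x then 1 else 0) : R) =
      (if a = x then 1 else 0) - (if a = y then 1 else 0) := fun a => by
    split_ifs <;> simp_all
  simp only [h, mul_sub, mul_boole, sum_sub_distrib, sum_ite_eq', mem_univ, if_true]

theorem Fintype.sum_ite_eq_add_nsmul {α : Type*} [Fintype α] [DecidableEq α] {M : Type*}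
    [AddCommMonoid M] (b : α) (p q : M) :
    ∑ a, (if a = b then p else q) = p + (Fintype.card α - 1) • q := by
  rw [Fintype.sum_eq_add_sum_compl b, if_pos rfl,
    Finset.sum_congr rfl fun a ha => if_neg (Finset.mem_compl.1 ha ∘ Finset.mem_singleton.2),
    sum_const, card_compl, card_singleton]

theorem expected_distance_difference_general (d K s : ℕ) (hK : 1 ≤ K)
    (ρ : ℝ) (γ : ℝ) (hγ : γ = (1 - ρ) / K)
    (x xt : Fin d → Fin (K + 1)) (hdist : hammingDist x xt = s) :
    ∑ x' : Fin d → Fin (K + 1),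
      (γ ^ (hammingDist x' x) * ρ ^ (d - hammingDist x' x)) *
        ((hammingDist x' xt : ℝ) - (hammingDist x' x : ℝ))
      = (ρ - γ) * s := by
  set w : Fin d → Fin (K + 1) → ℝ := fun i a => if a = x i then ρ else γ
  have hw : ∀ i, ∑ a, w i a = 1 := fun i => by
    have hK0 : (K : ℝ) ≠ 0 := Nat.cast_ne_zero.2 (by omega)
    rw [Fintype.sum_ite_eq_add_nsmul, Fintype.card_fin, Nat.add_sub_cancel, nsmul_eq_mul, hγ,
      mul_div_cancel₀ _ hK0]
    ring
  calc _ = ∑ x' : Fin d → Fin (K + 1), (∏ i, w i (x' i)) *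
        ∑ j, ((if x' j ≠ xt j then 1 else 0) - (if x' j ≠ x j then 1 else 0)) := by
        simp_rw [w, prod_ite_eq_eq_pow_hammingDist, natCast_hammingDist, sum_sub_distrib,
          Fintype.card_fin]
    _ = ∑ j, (ρ - w j (xt j)) := by
        rw [Fintype.sum_prod_mul_sum_apply w hw fun j a =>
          (if a ≠ xt j then 1 else 0) - if a ≠ x j then 1 else 0]
        simp only [sum_mul_boole_ne_sub, w, if_pos]
    _ = (ρ - γ) * s := by
        have h : ∀ j, ρ - w j (xt j) = (ρ - γ) * if x j ≠ xt j then 1 else 0 := fun j => by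
          by_cases hj : x j = xt j <;> simp [w, hj, eq_comm]
        simp_rw [h, ← mul_sum, ← natCast_hammingDist, hdist]

/-- Expected difference of Hamming distances under flip noise:
E_{x' ~ flip(x)}[dist(x', xt) - dist(x', x)] = (ρ - γ)·s when dist(x, xt) = s. -/
theorem expected_distance_difference (d K s : ℕ) (hd : 1 ≤ d) (hK : 1 ≤ K) (hs : s ≤ d)
    (ρ : ℝ) (hρ0 : 0 < ρ) (hρ1 : ρ ≤ 1) (γ : ℝ) (hγ : γ = (1 - ρ) / K)
    (x xt : Fin d → Fin (K + 1)) (hdist : hammingDist x xt = s) :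
    ∑ x' : Fin d → Fin (K + 1),
      (γ ^ (hammingDist x' x) * ρ ^ (d - hammingDist x' x)) *
        ((hammingDist x' xt : ℝ) - (hammingDist x' x : ℝ))
      = (ρ - γ) * s :=
  expected_distance_difference_general d K s hK ρ γ hγ x xt hdist
end

section
/- (Greedy lower bound via likelihood-ratio partition, binary case.) Let Ω be a finite sample space with two probability mass functions p, q : Ω → ℝ≥0 (each summing to 1). Suppose Ω is partitioned into disjoint sets L₁, ..., L_m such that on each Lᵢ the likelihood ratio p(o)/q(o) is a constant ηᵢ ∈ [0, ∞] (with ηᵢ = ∞ allowed when q vanishes on Lᵢ), and η₁ ≥ η₂ ≥ ... ≥ η_m. Let p* ∈ [0, 1] and let i* be the least index i with ∑_{j=1}^i p(Lⱼ) ≥ p*. Define lb = ∑_{j=1}^{i*-1} q(Lⱼ) + (p* - ∑_{j=1}^{i*-1} p(Lⱼ)) / η_{i*}. Then for every function h : Ω → [0, 1] with ∑_{o} p(o) h(o) = p*, we have ∑_{o} q(o) h(o) ≥ lb. -/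
open Finset
open scoped ENNReal

/-!
Neyman–Pearson argument. Let `c = η i*` and let `s` be the union of the pieces `L j` with `j < i*`,
on which `c q ≤ p`, while `p ≤ c q` off `s`. For `h : Ω → [0, 1]` the indicator of `s` therefore
minimises `∑ (c q - p) h`, which rearranges to `lb ≤ ∑ q h` when `0 < c < ∞`. If `c = ∞` then `q`
vanishes on `s`, and if `c = 0` the minimality of `i*` forces `s = ∅`; in both cases `lb = 0`,
since `ENNReal.toReal` sends `∞` to `0`.
-/

theorem Finset.sum_le_sum_mul_of_nonpos_of_nonneg {Ω : Type*} [Fintype Ω] [DecidableEq Ω]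
    (s : Finset Ω) {f h : Ω → ℝ} (hs : ∀ o ∈ s, f o ≤ 0) (hsc : ∀ o ∉ s, 0 ≤ f o)
    (h0 : ∀ o, 0 ≤ h o) (h1 : ∀ o, h o ≤ 1) :
    ∑ o ∈ s, f o ≤ ∑ o, f o * h o := by
  rw [← sum_add_sum_compl s]
  have hin : ∑ o ∈ s, f o ≤ ∑ o ∈ s, f o * h o :=
    sum_le_sum fun o ho => by nlinarith [hs o ho, h1 o]
  have hout : 0 ≤ ∑ o ∈ sᶜ, f o * h o :=
    sum_nonneg fun o ho => mul_nonneg (hsc o (mem_compl.1 ho)) (h0 o)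
  linarith

theorem sum_add_div_le_sum_mul_of_threshold {Ω : Type*} [Fintype Ω] [DecidableEq Ω]
    {p q h : Ω → ℝ} (s : Finset Ω) {c : ℝ} (hc : 0 < c)
    (hs : ∀ o ∈ s, c * q o ≤ p o) (hsc : ∀ o ∉ s, p o ≤ c * q o)
    (h0 : ∀ o, 0 ≤ h o) (h1 : ∀ o, h o ≤ 1) :
    ∑ o ∈ s, q o + (∑ o, p o * h o - ∑ o ∈ s, p o) / c ≤ ∑ o, q o * h o := by
  have key := s.sum_le_sum_mul_of_nonpos_of_nonneg (f := fun o => c * q o - p o)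
    (fun o ho => sub_nonpos.2 (hs o ho)) (fun o ho => sub_nonneg.2 (hsc o ho)) h0 h1
  simp only [sub_mul, mul_assoc, sum_sub_distrib, ← mul_sum] at key
  rw [add_div' _ _ _ hc.ne', div_le_iff₀ hc]
  linarith

theorem Finset.pairwiseDisjoint_of_existsUnique {ι Ω : Type*} {L : ι → Finset Ω}
    (hL : ∀ o, ∃! i, o ∈ L i) (t : Set ι) : t.PairwiseDisjoint L :=
  fun _ _ _ _ hij => disjoint_left.2 fun _ hoi hoj => hij ((hL _).unique hoi hoj)

theorem Finset.sum_Iio_lt_of_forall_sum_Iic_lt {ι : Type*} [LinearOrder ι]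
    [LocallyFiniteOrderBot ι] {a : ι → ℝ} {x : ℝ} {k : ι} (hk : (Iio k).Nonempty)
    (h : ∀ i < k, ∑ j ∈ Iic i, a j < x) : ∑ j ∈ Iio k, a j < x := by
  have hmax := mem_Iio.1 ((Iio k).max'_mem hk)
  have hIio : Iio k = Iic ((Iio k).max' hk) := by
    ext j
    simp only [mem_Iio, mem_Iic]
    exact ⟨fun hj => (Iio k).le_max' j (mem_Iio.2 hj), fun hj => hj.trans_lt hmax⟩
  rw [hIio]
  exact h _ hmax

theorem Finset.Iio_eq_empty_of_le_sum_Iic {ι : Type*} [LinearOrder ι] [LocallyFiniteOrderBot ι]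
    {a : ι → ℝ} {x : ℝ} {k : ι} (hk : a k ≤ 0) (hle : x ≤ ∑ j ∈ Iic k, a j)
    (hlt : ∀ i < k, ∑ j ∈ Iic i, a j < x) : Iio k = ∅ := by
  classical
  by_contra hne
  have := sum_Iio_lt_of_forall_sum_Iic_lt (nonempty_iff_ne_empty.2 hne) hlt
  rw [← Iio_insert, sum_insert notMem_Iio_self] at hle
  linarith

section LikelihoodRatio

variable {ι Ω : Type*} [LinearOrder ι] [LocallyFiniteOrderBot ι] [DecidableEq Ω]
  {p q : Ω → ℝ} {L : ι → Finset Ω} {η : ι → ℝ≥0∞} {k : ι}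

theorem toReal_mul_le_of_mem_biUnion_Iio (hp0 : ∀ o, 0 ≤ p o) (hq0 : ∀ o, 0 ≤ q o)
    (hratio : ∀ i, ∀ o ∈ L i, (η i ≠ ⊤ → p o = (η i).toReal * q o) ∧ (η i = ⊤ → q o = 0))
    (hmono : Antitone η) (hk : η k ≠ ⊤) {o : Ω} (ho : o ∈ (Iio k).biUnion L) :
    (η k).toReal * q o ≤ p o := by
  obtain ⟨j, hj, hoj⟩ := mem_biUnion.1 ho
  rcases eq_or_ne (η j) ⊤ with hj_top | hj_top
  · simp [(hratio j o hoj).2 hj_top, hp0 o]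
  · rw [(hratio j o hoj).1 hj_top]
    exact mul_le_mul_of_nonneg_right
      ((ENNReal.toReal_le_toReal hk hj_top).2 (hmono (mem_Iio.1 hj).le)) (hq0 o)

theorem le_toReal_mul_of_notMem_biUnion_Iio (hq0 : ∀ o, 0 ≤ q o)
    (hratio : ∀ i, ∀ o ∈ L i, η i ≠ ⊤ → p o = (η i).toReal * q o)
    (hmono : Antitone η) (hk : η k ≠ ⊤) {o : Ω} (hcover : ∃ i, o ∈ L i)
    (ho : o ∉ (Iio k).biUnion L) : p o ≤ (η k).toReal * q o := by
  obtain ⟨j, hoj⟩ := hcover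
  have hkj : k ≤ j := not_lt.1 fun hj => ho (mem_biUnion.2 ⟨j, mem_Iio.2 hj, hoj⟩)
  have hj_top : η j ≠ ⊤ := ne_top_of_le_ne_top hk (hmono hkj)
  rw [hratio j o hoj hj_top]
  exact mul_le_mul_of_nonneg_right ((ENNReal.toReal_le_toReal hj_top hk).2 (hmono hkj)) (hq0 o)

theorem sum_biUnion_Iio_eq_zero_of_eq_top
    (hratio : ∀ i, ∀ o ∈ L i, η i = ⊤ → q o = 0) (hmono : Antitone η) (hk : η k = ⊤) :
    ∑ o ∈ (Iio k).biUnion L, q o = 0 := by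
  refine sum_eq_zero fun o ho => ?_
  obtain ⟨j, hj, hoj⟩ := mem_biUnion.1 ho
  exact hratio j o hoj (top_le_iff.1 (hk ▸ hmono (mem_Iio.1 hj).le))

end LikelihoodRatio

theorem neyman_pearson_lower_bound_general
    (Ω : Type*) [Fintype Ω] (p q : Ω → ℝ)
    (hp0 : ∀ o, 0 ≤ p o) (hq0 : ∀ o, 0 ≤ q o)
    (m : ℕ) (L : Fin m → Finset Ω)
    (hpart : ∀ o : Ω, ∃! i : Fin m, o ∈ L i)
    (η : Fin m → ℝ≥0∞)
    (hratio : ∀ i : Fin m, ∀ o ∈ L i,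
      (η i ≠ ⊤ → p o = (η i).toReal * q o) ∧ (η i = ⊤ → q o = 0))
    (hmono : ∀ i j : Fin m, i ≤ j → η j ≤ η i)
    (pstar : ℝ) (hps0 : 0 ≤ pstar)
    (istar : Fin m)
    (hile : pstar ≤ ∑ j ∈ Finset.Iic istar, ∑ o ∈ L j, p o)
    (hilt : ∀ i : Fin m, i < istar → ∑ j ∈ Finset.Iic i, ∑ o ∈ L j, p o < pstar)
    (lb : ℝ)
    (hlb : lb = (∑ j ∈ Finset.Iio istar, ∑ o ∈ L j, q o) +
      (ENNReal.ofReal (pstar - ∑ j ∈ Finset.Iio istar, ∑ o ∈ L j, p o) / η istar).toReal)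
    (h : Ω → ℝ) (hh : ∀ o, 0 ≤ h o ∧ h o ≤ 1)
    (hperf : ∑ o, p o * h o = pstar) :
    lb ≤ ∑ o, q o * h o := by
  classical
  set s := (Iio istar).biUnion L
  have hsum (f : Ω → ℝ) : ∑ j ∈ Iio istar, ∑ o ∈ L j, f o = ∑ o ∈ s, f o :=
    (sum_biUnion (pairwiseDisjoint_of_existsUnique hpart _)).symm
  have hPs : ∑ o ∈ s, p o ≤ pstar := by
    rw [← hsum]
    rcases (Iio istar).eq_empty_or_nonempty with hempty | hne
    · simpa [hempty] using hps0
    · exact (sum_Iio_lt_of_forall_sum_Iic_lt hne hilt).le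
  have hlb' : lb = ∑ o ∈ s, q o + (pstar - ∑ o ∈ s, p o) / (η istar).toReal := by
    rw [hlb, hsum, hsum, ENNReal.toReal_div, ENNReal.toReal_ofReal (sub_nonneg.2 hPs)]
  rcases ENNReal.toReal_nonneg.lt_or_eq with hc | hc
  · have hc_top : η istar ≠ ⊤ := (ENNReal.toReal_pos_iff.1 hc).2.ne
    rw [hlb', ← hperf]
    exact sum_add_div_le_sum_mul_of_threshold s hc
      (fun o => toReal_mul_le_of_mem_biUnion_Iio hp0 hq0 hratio hmono hc_top)
      (fun o => le_toReal_mul_of_notMem_biUnion_Iio hq0 (fun i o ho => (hratio i o ho).1)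
        hmono hc_top (hpart o).exists)
      (fun o => (hh o).1) (fun o => (hh o).2)
  · have hQs : ∑ o ∈ s, q o = 0 := by
      rcases (ENNReal.toReal_eq_zero_iff _).1 hc.symm with hzero | htop
      · have hpL : ∑ o ∈ L istar, p o ≤ 0 :=
          (sum_eq_zero fun o ho => by simp [(hratio istar o ho).1 (by simp [hzero]), hzero]).le
        simp [s, Iio_eq_empty_of_le_sum_Iic (a := fun j => ∑ o ∈ L j, p o) hpL hile hilt]
      · exact sum_biUnion_Iio_eq_zero_of_eq_top (fun i o ho => (hratio i o ho).2) hmono htop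
    rw [hlb', ← hc, div_zero, add_zero, hQs]
    exact sum_nonneg fun o _ => mul_nonneg (hq0 o) (hh o).1

/-- Neyman–Pearson greedy lower bound (binary case): for any randomized classifier
`h : Ω → [0,1]` whose performance under `p` is exactly `p*`, its performance under `q`
is at least the greedy bound `lb` obtained by filling the subspaces of highest
likelihood ratio first.  Likelihood ratios `η i ∈ [0,∞]` are constant on each piece
`L i` of the partition and decreasing in `i`; division by `η = ∞` yields `0`. -/
theorem neyman_pearson_lower_bound
    (Ω : Type*) [Fintype Ω] (p q : Ω → ℝ)
    (hp0 : ∀ o, 0 ≤ p o) (hq0 : ∀ o, 0 ≤ q o)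
    (hp1 : ∑ o, p o = 1) (hq1 : ∑ o, q o = 1)
    (m : ℕ) (L : Fin m → Finset Ω)
    (hpart : ∀ o : Ω, ∃! i : Fin m, o ∈ L i)
    (η : Fin m → ℝ≥0∞)
    (hratio : ∀ i : Fin m, ∀ o ∈ L i,
      (η i ≠ ⊤ → p o = (η i).toReal * q o) ∧ (η i = ⊤ → q o = 0))
    (hmono : ∀ i j : Fin m, i ≤ j → η j ≤ η i)
    (pstar : ℝ) (hps0 : 0 ≤ pstar) (hps1 : pstar ≤ 1)
    (istar : Fin m)
    (hile : pstar ≤ ∑ j ∈ Finset.Iic istar, ∑ o ∈ L j, p o)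
    (hilt : ∀ i : Fin m, i < istar → ∑ j ∈ Finset.Iic i, ∑ o ∈ L j, p o < pstar)
    (lb : ℝ)
    (hlb : lb = (∑ j ∈ Finset.Iio istar, ∑ o ∈ L j, q o) +
      (ENNReal.ofReal (pstar - ∑ j ∈ Finset.Iio istar, ∑ o ∈ L j, p o) / η istar).toReal)
    (h : Ω → ℝ) (hh : ∀ o, 0 ≤ h o ∧ h o ≤ 1)
    (hperf : ∑ o, p o * h o = pstar) :
    lb ≤ ∑ o, q o * h o :=
  neyman_pearson_lower_bound_general Ω p q hp0 hq0 m L hpart η hratio hmono pstar hps0 istar hile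
    hilt lb hlb h hh hperf
end

section
/- (Tightness of the greedy lower bound.) In the setting of the Neyman–Pearson greedy bound—finite Ω, PMFs p, q, partition L₁,...,L_m with constant likelihood ratios η₁ ≥ ... ≥ η_m where ηᵢ = p(o)/q(o) on Lᵢ, p* ∈ [0,1], i* the least index with ∑_{j≤i*} p(Lⱼ) ≥ p*—assume all ηᵢ are finite and all p(Lᵢ) > 0. Define h* : Ω → [0,1] by h*(o) = 1 for o ∈ Lⱼ with j < i*, h*(o) = (p* - ∑_{j<i*} p(Lⱼ))/p(L_{i*}) for o ∈ L_{i*}, and h*(o) = 0 otherwise. Then ∑_o p(o) h*(o) = p* and ∑_o q(o) h*(o) = ∑_{j<i*} q(Lⱼ) + (p* - ∑_{j<i*} p(Lⱼ))/η_{i*}. -/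
/-!
On each piece `L i` the classifier `h` is constant, so both performances collapse to sums over
pieces: the pieces before `i*` count fully and `L i*` with weight
`t = (p* - ∑_{j<i*} p(Lⱼ)) / p(L_{i*})`. This gives `p`-performance `∑_{j<i*} p(Lⱼ) + t p(L_{i*}) = p*`,
and since `p(L_{i*}) = η_{i*} q(L_{i*})`, the `q`-performance is `∑_{j<i*} q(Lⱼ) + t p(L_{i*}) / η_{i*}`.
-/

open Finset

theorem Finset.sum_eq_sum_sum_of_existsUnique_mem {ι Ω M : Type*} [Fintype ι] [Fintype Ω]
    [AddCommMonoid M] {L : ι → Finset Ω} (hL : ∀ o, ∃! i, o ∈ L i) (f : Ω → M) :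
    ∑ o, f o = ∑ i, ∑ o ∈ L i, f o := by
  classical
  choose idx hidx huniq using hL
  have hfiber : ∀ i, L i = univ.filter (idx · = i) := fun i => by
    ext o
    rw [mem_filter_univ]
    exact ⟨fun ho => (huniq o i ho).symm, fun hi => hi ▸ hidx o⟩
  simp only [hfiber]
  exact (sum_fiberwise univ idx f).symm

theorem Finset.sum_mul_eq_sum_mul_sum_of_existsUnique_mem {ι Ω R : Type*} [Fintype ι]
    [Fintype Ω] [NonUnitalNonAssocSemiring R] {L : ι → Finset Ω} (hL : ∀ o, ∃! i, o ∈ L i)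
    {h : Ω → R} {c : ι → R} (hc : ∀ i, ∀ o ∈ L i, h o = c i) (g : Ω → R) :
    ∑ o, g o * h o = ∑ i, (∑ o ∈ L i, g o) * c i := by
  rw [sum_eq_sum_sum_of_existsUnique_mem hL]
  refine sum_congr rfl fun i _ => ?_
  rw [sum_mul]
  exact sum_congr rfl fun o ho => by rw [hc i o ho]

def greedyWeight {ι R : Type*} [LinearOrder ι] [Zero R] [One R] (k : ι) (t : R) (i : ι) : R :=
  if i < k then 1 else if i = k then t else 0

theorem sum_mul_greedyWeight {ι R : Type*} [Fintype ι] [LinearOrder ι] [LocallyFiniteOrderBot ι]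
    [NonAssocSemiring R] (k : ι) (t : R) (P : ι → R) :
    ∑ i, P i * greedyWeight k t i = ∑ i ∈ Iio k, P i + P k * t := by
  simp only [greedyWeight, mul_ite, mul_one, mul_zero]
  rw [sum_ite, filter_gt_eq_Iio, sum_ite, sum_const_zero, add_zero]
  congr 1
  rw [sum_filter, sum_ite_eq']
  simp

theorem neyman_pearson_tightness_general
    (Ω : Type*) [Fintype Ω] (p q : Ω → ℝ)
    (m : ℕ) (L : Fin m → Finset Ω)
    (hpart : ∀ o : Ω, ∃! i : Fin m, o ∈ L i)
    (η : Fin m → ℝ)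
    (hratio : ∀ i : Fin m, ∀ o ∈ L i, p o = η i * q o)
    (hLpos : ∀ i : Fin m, 0 < ∑ o ∈ L i, p o)
    (pstar : ℝ)
    (istar : Fin m)
    (h : Ω → ℝ)
    (hdef : ∀ i : Fin m, ∀ o ∈ L i, h o =
      if i < istar then 1
      else if i = istar then
        (pstar - ∑ j ∈ Finset.Iio istar, ∑ o' ∈ L j, p o') / (∑ o' ∈ L istar, p o')
      else 0) :
    (∑ o, p o * h o = pstar) ∧
    (∑ o, q o * h o = (∑ j ∈ Finset.Iio istar, ∑ o ∈ L j, q o) +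
      (pstar - ∑ j ∈ Finset.Iio istar, ∑ o ∈ L j, p o) / η istar) := by
  set t := (pstar - ∑ j ∈ Iio istar, ∑ o ∈ L j, p o) / ∑ o ∈ L istar, p o with ht
  have hperf : ∀ g : Ω → ℝ,
      ∑ o, g o * h o = ∑ j ∈ Iio istar, ∑ o ∈ L j, g o + (∑ o ∈ L istar, g o) * t := fun g => by
    rw [sum_mul_eq_sum_mul_sum_of_existsUnique_mem hpart hdef, ← sum_mul_greedyWeight]
    rfl
  have hPpos := hLpos istar
  have hPQ : ∑ o ∈ L istar, p o = η istar * ∑ o ∈ L istar, q o := by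
    rw [mul_sum]
    exact sum_congr rfl (hratio istar)
  have hη : η istar ≠ 0 := fun h0 => by simp [h0] at hPQ; linarith
  have hQ : ∑ o ∈ L istar, q o ≠ 0 := fun h0 => by simp [h0] at hPQ; linarith
  refine ⟨?_, ?_⟩
  · rw [hperf, ht]
    field_simp
    ring
  · rw [hperf, ht, hPQ]
    field_simp

/-- Tightness of the greedy Neyman–Pearson lower bound: with finite likelihood
ratios `η i` (constant on each partition piece, decreasing) and `p(Lᵢ) > 0`, the
greedy classifier `h*` — equal to `1` on pieces before `i*`, the appropriate
fraction on `L i*`, and `0` after — has `p`-performance exactly `p*` and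
`q`-performance exactly the greedy lower bound. -/
theorem neyman_pearson_tightness
    (Ω : Type*) [Fintype Ω] (p q : Ω → ℝ)
    (hp0 : ∀ o, 0 ≤ p o) (hq0 : ∀ o, 0 ≤ q o)
    (hp1 : ∑ o, p o = 1) (hq1 : ∑ o, q o = 1)
    (m : ℕ) (L : Fin m → Finset Ω)
    (hpart : ∀ o : Ω, ∃! i : Fin m, o ∈ L i)
    (η : Fin m → ℝ)
    (hratio : ∀ i : Fin m, ∀ o ∈ L i, p o = η i * q o)
    (hmono : ∀ i j : Fin m, i ≤ j → η j ≤ η i)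
    (hLpos : ∀ i : Fin m, 0 < ∑ o ∈ L i, p o)
    (pstar : ℝ) (hps0 : 0 ≤ pstar) (hps1 : pstar ≤ 1)
    (istar : Fin m)
    (hile : pstar ≤ ∑ j ∈ Finset.Iic istar, ∑ o ∈ L j, p o)
    (hilt : ∀ i : Fin m, i < istar → ∑ j ∈ Finset.Iic i, ∑ o ∈ L j, p o < pstar)
    (h : Ω → ℝ)
    (hdef : ∀ i : Fin m, ∀ o ∈ L i, h o =
      if i < istar then 1
      else if i = istar then
        (pstar - ∑ j ∈ Finset.Iio istar, ∑ o' ∈ L j, p o') / (∑ o' ∈ L istar, p o')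
      else 0) :
    (∑ o, p o * h o = pstar) ∧
    (∑ o, q o * h o = (∑ j ∈ Finset.Iio istar, ∑ o ∈ L j, q o) +
      (pstar - ∑ j ∈ Finset.Iio istar, ∑ o ∈ L j, p o) / η istar) :=
  neyman_pearson_tightness_general Ω p q m L hpart η hratio hLpos pstar istar h hdef
end

section
/- (Soundness of the relaxed Neyman–Pearson bound.) Let Ω be finite with PMFs p, q and a partition L₁, ..., L_m with constant likelihood ratios η₁ ≥ ... ≥ η_m as before. Let B ⊆ {1, ..., m} and let δ_p = ∑_{i ∉ B} p(Lᵢ). Let lb be the greedy lower bound computed from all m subspaces with budget p*, and let lb_δ be the greedy lower bound computed using only the subspaces {Lᵢ}_{i ∈ B} (in the same likelihood-ratio order) with reduced budget p* - δ_p. Then lb_δ ≤ lb. -/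
open Finset
open scoped Classical

/-- The greedy lower bound for an ordered family `S` of subspaces with `p`-masses `P`,
`q`-masses `Q`, likelihood ratios `η`, and budget `b`: take subspaces of `S` in order
until the `p`-masses reach `b`; the bound is the sum of `q`-masses of the fully used
subspaces plus the remaining budget divided by the ratio of the partially used
subspace; it is `0` if the budget is nonpositive (or cannot be met). -/
noncomputable def greedyLB {m : ℕ} (S : Finset (Fin m)) (P Q η : Fin m → ℝ) (b : ℝ) : ℝ :=
  if hb : 0 < b ∧ (S.filter (fun i => b ≤ ∑ j ∈ S.filter (· ≤ i), P j)).Nonempty then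
    (∑ j ∈ S.filter (· < (S.filter (fun i => b ≤ ∑ j ∈ S.filter (· ≤ i), P j)).min' hb.2), Q j)
      + (b - ∑ j ∈ S.filter (· < (S.filter (fun i => b ≤ ∑ j ∈ S.filter (· ≤ i), P j)).min' hb.2), P j)
        / η ((S.filter (fun i => b ≤ ∑ j ∈ S.filter (· ≤ i), P j)).min' hb.2)
  else 0

/-!
The greedy bound is the optimum of the fractional covering problem: minimise
`∑ tⱼ Qⱼ` over `0 ≤ t ≤ 1` with `∑ tⱼ Pⱼ ≥ b`. If `i` is the index at which the greedy
scan exhausts the budget, weak duality with the price `1 / η i` shows that every feasible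
`t` costs at least the greedy value (`η` is antitone and `P = η Q`), and the greedy
selection (everything before `i`, the right fraction of `i`) attains it. Restricting an
optimal selection for `(T, b)` to `S ⊆ T` loses at most the mass `∑_{T \ S} P`, so it is
feasible for `(S, b - ∑_{T \ S} P)` and costs no more.
-/

section Critical

variable {ι : Type*} [LinearOrder ι] {S : Finset ι} {P Q η : ι → ℝ} {b : ℝ} {i : ι}

def IsCritical (S : Finset ι) (P : ι → ℝ) (b : ℝ) (i : ι) : Prop :=
  i ∈ S ∧ ∑ j ∈ S.filter (· < i), P j < b ∧ b ≤ ∑ j ∈ S.filter (· ≤ i), P j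

noncomputable def greedyValue (S : Finset ι) (P Q η : ι → ℝ) (b : ℝ) (i : ι) : ℝ :=
  ∑ j ∈ S.filter (· < i), Q j + (b - ∑ j ∈ S.filter (· < i), P j) / η i

theorem sum_filter_le_eq_add_sum_filter_lt {M : Type*} [AddCommMonoid M] (hi : i ∈ S)
    (f : ι → M) :
    ∑ j ∈ S.filter (· ≤ i), f j = f i + ∑ j ∈ S.filter (· < i), f j := by
  rw [← sum_insert (by simp)]
  congr 1
  ext j
  simp only [mem_filter, mem_insert, le_iff_lt_or_eq]
  constructor
  · rintro ⟨hj, hji | rfl⟩ <;> simp_all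
  · rintro (rfl | ⟨hj, hji⟩) <;> simp_all

theorem exists_isCritical (hb : 0 < b) (hbS : b ≤ ∑ j ∈ S, P j) : ∃ i, IsCritical S P b i := by
  induction S using Finset.induction_on_max with
  | empty => simp only [sum_empty] at hbS; linarith
  | insert a s hlt ih =>
    by_cases hs : b ≤ ∑ j ∈ s, P j
    · obtain ⟨i, his, hlt_i, hle_i⟩ := ih hs
      have hia : ¬ a ≤ i := not_le.2 (hlt i his)
      refine ⟨i, mem_insert_of_mem his, ?_, ?_⟩
      · rwa [filter_insert, if_neg (fun h => hia h.le)]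
      · rwa [filter_insert, if_neg hia]
    · refine ⟨a, mem_insert_self a s, ?_, ?_⟩
      · rwa [filter_insert, if_neg (lt_irrefl a), filter_true_of_mem hlt, ← not_le]
      · have hall : ∀ j ∈ insert a s, j ≤ a := fun j hj =>
          (mem_insert.1 hj).elim le_of_eq fun hj => (hlt j hj).le
        rwa [filter_true_of_mem hall]

namespace IsCritical

theorem remaining_budget_le_mass (h : IsCritical S P b i) :
    b - ∑ j ∈ S.filter (· < i), P j ≤ P i := by
  have := h.2.2
  rw [sum_filter_le_eq_add_sum_filter_lt h.1] at this
  linarith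

theorem mass_pos (h : IsCritical S P b i) : 0 < P i := by
  linarith [h.remaining_budget_le_mass, h.2.1]

theorem ratio_pos (h : IsCritical S P b i) (hQ0 : ∀ j, 0 ≤ Q j)
    (hPQ : ∀ j, P j = η j * Q j) : 0 < η i :=
  pos_of_mul_pos_left (hPQ i ▸ h.mass_pos) (hQ0 i)

theorem greedyValue_le_sum_mul (h : IsCritical S P b i) (hQ0 : ∀ j, 0 ≤ Q j)
    (hPQ : ∀ j, P j = η j * Q j) (hη : Antitone η) {t : ι → ℝ} (ht0 : ∀ j, 0 ≤ t j)
    (ht1 : ∀ j, t j ≤ 1) (hbt : b ≤ ∑ j ∈ S, t j * P j) :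
    greedyValue S P Q η b i ≤ ∑ j ∈ S, t j * Q j := by
  have hηi := h.ratio_pos hQ0 hPQ
  have hbefore : ∀ j ∈ S.filter (· < i),
      η i * Q j - P j + t j * P j ≤ η i * (t j * Q j) := by
    intro j hj
    have hji := hη (mem_filter.1 hj).2.le
    have : 0 ≤ (1 - t j) * ((η j - η i) * Q j) :=
      mul_nonneg (by linarith [ht1 j]) (mul_nonneg (by linarith) (hQ0 j))
    rw [hPQ j]
    linarith
  have hafter : ∀ j ∈ S.filter (fun j => ¬ j < i), t j * P j ≤ η i * (t j * Q j) := by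
    intro j hj
    have hij := hη (not_lt.1 (mem_filter.1 hj).2)
    have : 0 ≤ t j * ((η i - η j) * Q j) :=
      mul_nonneg (ht0 j) (mul_nonneg (by linarith) (hQ0 j))
    rw [hPQ j]
    linarith
  have hsum := add_le_add (sum_le_sum hbefore) (sum_le_sum hafter)
  rw [← mul_sum, ← mul_sum, ← mul_add, sum_filter_add_sum_filter_not, sum_add_distrib,
    sum_sub_distrib, ← mul_sum] at hsum
  rw [← sum_filter_add_sum_filter_not S (· < i) (fun j => t j * P j)] at hbt
  unfold greedyValue
  rw [← le_sub_iff_add_le', div_le_iff₀ hηi]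
  linarith

theorem exists_sum_mul_eq_greedyValue (h : IsCritical S P b i) (hQ0 : ∀ j, 0 ≤ Q j)
    (hPQ : ∀ j, P j = η j * Q j) :
    ∃ t : ι → ℝ, (∀ j, 0 ≤ t j) ∧ (∀ j, t j ≤ 1) ∧ ∑ j ∈ S, t j * P j = b ∧
      ∑ j ∈ S, t j * Q j = greedyValue S P Q η b i := by
  set θ := (b - ∑ j ∈ S.filter (· < i), P j) / P i
  have hPi := h.mass_pos
  have hQi : Q i ≠ 0 := right_ne_zero_of_mul (hPQ i ▸ hPi.ne')
  have hθ0 : 0 ≤ θ := div_nonneg (by linarith [h.2.1]) hPi.le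
  have hθ1 : θ ≤ 1 := (div_le_one hPi).2 h.remaining_budget_le_mass
  let t : ι → ℝ := fun j => if j < i then 1 else if j = i then θ else 0
  have hsum : ∀ f : ι → ℝ, ∑ j ∈ S, t j * f j = ∑ j ∈ S.filter (· < i), f j + θ * f i := by
    intro f
    rw [← sum_filter_add_sum_filter_not S (· < i)]
    congr 1
    · exact sum_congr rfl fun j hj => by simp [t, (mem_filter.1 hj).2]
    · rw [sum_eq_single_of_mem i (mem_filter.2 ⟨h.1, lt_irrefl i⟩)]
      · simp [t]
      · intro j hj hji
        simp [t, hji, (mem_filter.1 hj).2]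
  refine ⟨t, fun j => ?_, fun j => ?_, ?_, ?_⟩
  · simp only [t]; split_ifs <;> linarith
  · simp only [t]; split_ifs <;> linarith
  · rw [hsum, div_mul_cancel₀ _ hPi.ne']
    ring
  · rw [hsum, greedyValue]
    simp only [θ]
    rw [hPQ i]
    field_simp [hQi, (h.ratio_pos hQ0 hPQ).ne']

end IsCritical

end Critical

section Greedy

variable {m : ℕ} {S T : Finset (Fin m)} {P Q η : Fin m → ℝ} {b : ℝ}

theorem greedyLB_eq_greedyValue (hP0 : ∀ j, 0 ≤ P j) {i : Fin m} (h : IsCritical S P b i) :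
    greedyLB S P Q η b = greedyValue S P Q η b i := by
  have hb : 0 < b := (sum_nonneg fun j _ => hP0 j).trans_lt h.2.1
  have hi : i ∈ S.filter (fun k => b ≤ ∑ j ∈ S.filter (· ≤ k), P j) :=
    mem_filter.2 ⟨h.1, h.2.2⟩
  have hmin : ∀ hne, (S.filter (fun k => b ≤ ∑ j ∈ S.filter (· ≤ k), P j)).min' hne = i := by
    refine fun hne => le_antisymm (min'_le _ _ hi)
      (le_min' _ _ _ fun k hk => not_lt.1 fun hki => ?_)
    have hmass : ∑ j ∈ S.filter (· ≤ k), P j ≤ ∑ j ∈ S.filter (· < i), P j :=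
      sum_le_sum_of_subset_of_nonneg (monotone_filter_right S fun j _ hj => hj.trans_lt hki)
        fun j _ _ => hP0 j
    linarith [(mem_filter.1 hk).2, h.2.1]
  rw [greedyLB, dif_pos ⟨hb, i, hi⟩, hmin, greedyValue]

theorem greedyLB_eq_zero (hP0 : ∀ j, 0 ≤ P j) (h : ¬ (0 < b ∧ b ≤ ∑ j ∈ S, P j)) :
    greedyLB S P Q η b = 0 := by
  rw [greedyLB, dif_neg]
  rintro ⟨hb, k, hk⟩
  exact h ⟨hb, (mem_filter.1 hk).2.trans
    (sum_le_sum_of_subset_of_nonneg (filter_subset _ _) fun j _ _ => hP0 j)⟩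

theorem greedyLB_le_sum_mul (hP0 : ∀ j, 0 ≤ P j) (hQ0 : ∀ j, 0 ≤ Q j)
    (hPQ : ∀ j, P j = η j * Q j) (hη : Antitone η) {t : Fin m → ℝ} (ht0 : ∀ j, 0 ≤ t j)
    (ht1 : ∀ j, t j ≤ 1) (hbt : b ≤ ∑ j ∈ S, t j * P j) :
    greedyLB S P Q η b ≤ ∑ j ∈ S, t j * Q j := by
  by_cases hb : 0 < b ∧ b ≤ ∑ j ∈ S, P j
  · obtain ⟨i, hi⟩ := exists_isCritical hb.1 hb.2
    rw [greedyLB_eq_greedyValue hP0 hi]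
    exact hi.greedyValue_le_sum_mul hQ0 hPQ hη ht0 ht1 hbt
  · rw [greedyLB_eq_zero hP0 hb]
    exact sum_nonneg fun j _ => mul_nonneg (ht0 j) (hQ0 j)

theorem exists_sum_mul_eq_greedyLB (hP0 : ∀ j, 0 ≤ P j) (hQ0 : ∀ j, 0 ≤ Q j)
    (hPQ : ∀ j, P j = η j * Q j) (hbT : b ≤ ∑ j ∈ T, P j) :
    ∃ t : Fin m → ℝ, (∀ j, 0 ≤ t j) ∧ (∀ j, t j ≤ 1) ∧ b ≤ ∑ j ∈ T, t j * P j ∧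
      ∑ j ∈ T, t j * Q j = greedyLB T P Q η b := by
  by_cases hb : 0 < b
  · obtain ⟨i, hi⟩ := exists_isCritical hb hbT
    obtain ⟨t, ht0, ht1, htP, htQ⟩ := hi.exists_sum_mul_eq_greedyValue hQ0 hPQ
    exact ⟨t, ht0, ht1, htP.ge, by rw [htQ, greedyLB_eq_greedyValue hP0 hi]⟩
  · refine ⟨0, fun _ => le_rfl, fun _ => zero_le_one, by simpa using not_lt.1 hb, ?_⟩
    rw [greedyLB_eq_zero hP0 fun h => hb h.1]
    simp

theorem greedyLB_sdiff_le (hP0 : ∀ j, 0 ≤ P j) (hQ0 : ∀ j, 0 ≤ Q j)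
    (hPQ : ∀ j, P j = η j * Q j) (hη : Antitone η) (hST : S ⊆ T) :
    greedyLB S P Q η (b - ∑ j ∈ T \ S, P j) ≤ greedyLB T P Q η b := by
  by_cases hbT : b ≤ ∑ j ∈ T, P j
  · obtain ⟨t, ht0, ht1, htP, htQ⟩ := exists_sum_mul_eq_greedyLB hP0 hQ0 hPQ hbT
    have hout : ∑ j ∈ T \ S, t j * P j ≤ ∑ j ∈ T \ S, P j :=
      sum_le_sum fun j _ => mul_le_of_le_one_left (hP0 j) (ht1 j)
    have hcover : b - ∑ j ∈ T \ S, P j ≤ ∑ j ∈ S, t j * P j := by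
      rw [← sum_sdiff hST] at htP
      linarith
    calc greedyLB S P Q η (b - ∑ j ∈ T \ S, P j)
        ≤ ∑ j ∈ S, t j * Q j := greedyLB_le_sum_mul hP0 hQ0 hPQ hη ht0 ht1 hcover
      _ ≤ ∑ j ∈ T, t j * Q j :=
        sum_le_sum_of_subset_of_nonneg hST fun j _ _ => mul_nonneg (ht0 j) (hQ0 j)
      _ = greedyLB T P Q η b := htQ
  · have hsplit := sum_sdiff hST (f := P)
    rw [greedyLB_eq_zero hP0 fun h => hbT h.2,
      greedyLB_eq_zero hP0 fun h => hbT (by linarith [h.2])]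

end Greedy

theorem relaxed_np_soundness_general
    (Ω : Type*) (p q : Ω → ℝ)
    (hp0 : ∀ o, 0 ≤ p o) (hq0 : ∀ o, 0 ≤ q o)
    (m : ℕ) (L : Fin m → Finset Ω)
    (η : Fin m → ℝ)
    (hratio : ∀ i : Fin m, ∀ o ∈ L i, p o = η i * q o)
    (hmono : ∀ i j : Fin m, i ≤ j → η j ≤ η i)
    (P Q : Fin m → ℝ)
    (hP : ∀ i, P i = ∑ o ∈ L i, p o) (hQ : ∀ i, Q i = ∑ o ∈ L i, q o)
    (pstar : ℝ)
    (B : Finset (Fin m)) :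
    greedyLB B P Q η (pstar - ∑ i ∈ Bᶜ, P i) ≤ greedyLB Finset.univ P Q η pstar := by
  have hP0 : ∀ i, 0 ≤ P i := fun i => hP i ▸ sum_nonneg fun o _ => hp0 o
  have hQ0 : ∀ i, 0 ≤ Q i := fun i => hQ i ▸ sum_nonneg fun o _ => hq0 o
  have hPQ : ∀ i, P i = η i * Q i := fun i => by
    rw [hP i, hQ i, mul_sum]
    exact sum_congr rfl (hratio i)
  rw [compl_eq_univ_sdiff]
  exact greedyLB_sdiff_le hP0 hQ0 hPQ (fun i j => hmono i j) (subset_univ B)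

/-- Soundness of the relaxed Neyman–Pearson bound: discarding the subspaces outside
`B` and reducing the budget by their `p`-mass can only decrease the greedy lower
bound: `lb_δ ≤ lb`. -/
theorem relaxed_np_soundness
    (Ω : Type*) [Fintype Ω] (p q : Ω → ℝ)
    (hp0 : ∀ o, 0 ≤ p o) (hq0 : ∀ o, 0 ≤ q o)
    (hp1 : ∑ o, p o = 1) (hq1 : ∑ o, q o = 1)
    (m : ℕ) (L : Fin m → Finset Ω)
    (hpart : ∀ o : Ω, ∃! i : Fin m, o ∈ L i)
    (η : Fin m → ℝ)
    (hratio : ∀ i : Fin m, ∀ o ∈ L i, p o = η i * q o)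
    (hmono : ∀ i j : Fin m, i ≤ j → η j ≤ η i)
    (P Q : Fin m → ℝ)
    (hP : ∀ i, P i = ∑ o ∈ L i, p o) (hQ : ∀ i, Q i = ∑ o ∈ L i, q o)
    (pstar : ℝ) (hps0 : 0 ≤ pstar) (hps1 : pstar ≤ 1)
    (B : Finset (Fin m)) :
    greedyLB B P Q η (pstar - ∑ i ∈ Bᶜ, P i) ≤ greedyLB Finset.univ P Q η pstar :=
  relaxed_np_soundness_general Ω p q hp0 hq0 m L η hratio hmono P Q hP hQ pstar B
end

section
/- (Fractional knapsack greedy optimality.) Let m ≥ 1 and suppose items 1, ..., m have volumes v₁, ..., v_m > 0 and costs c₁, ..., c_m > 0 with v₁/c₁ ≥ v₂/c₂ ≥ ... ≥ v_m/c_m. Let V ∈ [0, ∑ᵢ vᵢ] and let i* be the least index with ∑_{j=1}^{i*} vⱼ ≥ V. Then for every choice of fractions x₁, ..., x_m ∈ [0,1] with ∑ⱼ xⱼ vⱼ = V, the total cost ∑ⱼ xⱼ cⱼ is at least ∑_{j=1}^{i*-1} cⱼ + (V - ∑_{j=1}^{i*-1} vⱼ) · c_{i*}/v_{i*}. -/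
/-!
Weak LP duality with the multiplier `r = c_{i*} / v_{i*}`: items before `i*` are cheaper than `r`
per unit volume and are fully taken by the greedy filling `g`, items after `i*` are dearer and are
not taken at all, so every term of `∑ (x i - g i) * (c i - r * v i)` is nonnegative. Expanding the
sum and using that `x` and `g` fill the same volume `V` gives `∑ g i * c i ≤ ∑ x i * c i`.
-/

open Finset

theorem sum_mul_le_sum_mul_of_mul_sub_nonneg {ι : Type*} (s : Finset ι) (x y c v : ι → ℝ) (r : ℝ)
    (hvol : ∑ i ∈ s, y i * v i = ∑ i ∈ s, x i * v i)
    (h : ∀ i ∈ s, 0 ≤ (x i - y i) * (c i - r * v i)) :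
    ∑ i ∈ s, y i * c i ≤ ∑ i ∈ s, x i * c i := by
  have hsum := sum_nonneg h
  have hexpand : ∑ i ∈ s, (x i - y i) * (c i - r * v i) =
      ∑ i ∈ s, x i * c i - ∑ i ∈ s, y i * c i
        - r * (∑ i ∈ s, x i * v i - ∑ i ∈ s, y i * v i) := by
    rw [mul_sub, mul_sum, mul_sum, ← sum_sub_distrib, ← sum_sub_distrib, ← sum_sub_distrib]
    exact sum_congr rfl fun i _ => by ring
  rw [hexpand, hvol, sub_self, mul_zero, sub_zero, sub_nonneg] at hsum
  exact hsum

variable {ι : Type*} [LinearOrder ι]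

def greedyFilling (k : ι) (f : ℝ) (i : ι) : ℝ :=
  if i < k then 1 else if i = k then f else 0

theorem sum_greedyFilling_mul [Fintype ι] [LocallyFiniteOrderBot ι] (k : ι) (f : ℝ)
    (w : ι → ℝ) : ∑ i, greedyFilling k f i * w i = ∑ i ∈ Iio k, w i + f * w k := by
  have hterm : ∀ i, greedyFilling k f i * w i =
      (if i ∈ Iio k then w i else 0) + (if k = i then f * w k else 0) := by
    intro i
    rcases lt_trichotomy i k with hik | rfl | hki
    · simp [greedyFilling, hik, hik.ne']
    · simp [greedyFilling]
    · simp [greedyFilling, hki.not_gt, hki.ne, hki.ne']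
  simp only [hterm, sum_add_distrib, sum_ite_mem, univ_inter, sum_ite_eq, mem_univ, if_true]

theorem greedyFilling_exchange_nonneg {v c x : ι → ℝ} (hord : Antitone fun i => v i / c i)
    (hc : ∀ i, 0 < c i) (k : ι) (hvk : 0 < v k) (f : ℝ) (i : ι) (hx : 0 ≤ x i ∧ x i ≤ 1) :
    0 ≤ (x i - greedyFilling k f i) * (c i - c k / v k * v i) := by
  rcases lt_trichotomy i k with hik | rfl | hki
  · have hratio := hord hik.le
    rw [div_le_div_iff₀ (hc k) (hc i)] at hratio
    have hcheap : c i ≤ c k / v k * v i := by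
      rw [div_mul_eq_mul_div, le_div_iff₀ hvk]
      linarith
    simp only [greedyFilling, if_pos hik]
    exact mul_nonneg_of_nonpos_of_nonpos (by linarith [hx.2]) (by linarith)
  · rw [div_mul_cancel₀ _ hvk.ne', sub_self, mul_zero]
  · have hratio := hord hki.le
    rw [div_le_div_iff₀ (hc i) (hc k)] at hratio
    have hdear : c k / v k * v i ≤ c i := by
      rw [div_mul_eq_mul_div, div_le_iff₀ hvk]
      linarith
    simp only [greedyFilling, if_neg hki.not_gt, if_neg hki.ne']
    exact mul_nonneg (by linarith [hx.1]) (by linarith)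

theorem fractional_knapsack_greedy_general (m : ℕ)
    (v c : Fin m → ℝ) (hv : ∀ i, 0 < v i) (hc : ∀ i, 0 < c i)
    (hord : ∀ i j : Fin m, i ≤ j → v j / c j ≤ v i / c i)
    (V : ℝ)
    (istar : Fin m)
    (x : Fin m → ℝ) (hx : ∀ i, 0 ≤ x i ∧ x i ≤ 1)
    (hfill : ∑ i, x i * v i = V) :
    (∑ j ∈ Finset.Iio istar, c j)
      + (V - ∑ j ∈ Finset.Iio istar, v j) * c istar / v istar
      ≤ ∑ i, x i * c i := by
  set f := (V - ∑ j ∈ Iio istar, v j) / v istar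
  have hvol : ∑ i, greedyFilling istar f i * v i = V := by
    rw [sum_greedyFilling_mul, div_mul_cancel₀ _ (hv istar).ne']
    ring
  have hcost : ∑ i, greedyFilling istar f i * c i =
      ∑ j ∈ Iio istar, c j + (V - ∑ j ∈ Iio istar, v j) * c istar / v istar := by
    rw [sum_greedyFilling_mul]
    ring
  rw [← hcost]
  exact sum_mul_le_sum_mul_of_mul_sub_nonneg univ x _ c v (c istar / v istar)
    (hvol.trans hfill.symm)
    fun i _ => greedyFilling_exchange_nonneg hord hc istar (hv istar) f i (hx i)

/-- Fractional knapsack greedy optimality: with items ordered by decreasing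
volume-per-cost, any fractional filling of the knapsack of volume `V` costs at
least the greedy solution (full items before `i*`, a fraction of item `i*`). -/
theorem fractional_knapsack_greedy (m : ℕ) (hm : 1 ≤ m)
    (v c : Fin m → ℝ) (hv : ∀ i, 0 < v i) (hc : ∀ i, 0 < c i)
    (hord : ∀ i j : Fin m, i ≤ j → v j / c j ≤ v i / c i)
    (V : ℝ) (hV0 : 0 ≤ V) (hV1 : V ≤ ∑ i, v i)
    (istar : Fin m)
    (hile : V ≤ ∑ j ∈ Finset.Iic istar, v j)
    (hilt : ∀ i : Fin m, i < istar → ∑ j ∈ Finset.Iic i, v j < V)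
    (x : Fin m → ℝ) (hx : ∀ i, 0 ≤ x i ∧ x i ≤ 1)
    (hfill : ∑ i, x i * v i = V) :
    (∑ j ∈ Finset.Iio istar, c j)
      + (V - ∑ j ∈ Finset.Iio istar, v j) * c istar / v istar
      ≤ ∑ i, x i * c i :=
  fractional_knapsack_greedy_general m v c hv hc hord V istar x hx hfill
end

section
/- For the Bernoulli-type binary smoothing distribution: let ρ ∈ (0,1), γ = 1 - ρ (the case K = 1), and let x, x̃ ∈ Fin d → Fin 2 with Hamming distance s. For each integer t with |t| ≤ s, the set of x' with dist(x', x) - dist(x', x̃) = t is nonempty if and only if t ≡ s (mod 2), and on this set the likelihood ratio p(x')/q(x') equals (γ/ρ)^t, where p(x') = γ^{dist(x',x)} ρ^{d-dist(x',x)} and q(x') = γ^{dist(x',x̃)} ρ^{d-dist(x',x̃)}. -/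
/-!
Over `Fin 2` the disagreement indicators of three values at one coordinate always sum to an even
number, so `dist(x', x) + dist(x', x̃) ≡ dist(x, x̃) (mod 2)`, which forces `t ≡ s`. Conversely,
copying `x̃` into `x` on `k` of the `s` coordinates where they differ gives a point with
`t = k - (s - k)`. Since `γ ^ a * ρ ^ (d - a) = (γ / ρ) ^ a * ρ ^ d`, the likelihood ratio only
depends on the difference `a - b` of the two distances.
-/

open Finset

section Hamming

variable {ι : Type*} [Fintype ι]

theorem natCast_hammingDist_eq_sum {β R : Type*} [DecidableEq β] [AddCommMonoidWithOne R]
    (x y : ι → β) : ((hammingDist x y : ℕ) : R) = ∑ i, if x i ≠ y i then 1 else 0 := by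
  simp [hammingDist, card_filter]

theorem fin_two_ne_indicator_add : ∀ a b c : Fin 2,
    ((if a ≠ b then 1 else 0) + (if a ≠ c then 1 else 0) : ZMod 2) = if b ≠ c then 1 else 0 := by
  decide

theorem hammingDist_add_hammingDist_modEq_two (z x y : ι → Fin 2) :
    hammingDist z x + hammingDist z y ≡ hammingDist x y [MOD 2] := by
  rw [← ZMod.natCast_eq_natCast_iff, Nat.cast_add, natCast_hammingDist_eq_sum,
    natCast_hammingDist_eq_sum, natCast_hammingDist_eq_sum, ← sum_add_distrib]
  exact sum_congr rfl fun i _ => fin_two_ne_indicator_add (z i) (x i) (y i)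

theorem exists_hammingDist_eq_and_hammingDist_eq {β : Type*} [DecidableEq β] (x y : ι → β)
    {k : ℕ} (hk : k ≤ hammingDist x y) :
    ∃ z : ι → β, hammingDist z x = k ∧ hammingDist z y = hammingDist x y - k := by
  classical
  obtain ⟨T, hT, rfl⟩ := exists_subset_card_eq hk
  have hTxy : ∀ i ∈ T, x i ≠ y i := fun i hi => (mem_filter.mp (hT hi)).2
  refine ⟨T.piecewise y x, ?_, ?_⟩
  · have : ({i | T.piecewise y x i ≠ x i} : Finset ι) = T := by
      ext i
      by_cases hi : i ∈ T <;> simp [hi, (hTxy i · |>.symm)]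
    rw [hammingDist, this]
  · have : ({i | T.piecewise y x i ≠ y i} : Finset ι) = ({i | x i ≠ y i} : Finset ι) \ T := by
      ext i
      by_cases hi : i ∈ T <;> simp [hi]
    rw [hammingDist, this, card_sdiff_of_subset hT]
    rfl

end Hamming

theorem pow_mul_pow_sub_eq_zpow_mul_pow {K : Type*} [Field K] {γ ρ : K} (hρ : ρ ≠ 0)
    {n d : ℕ} (hn : n ≤ d) : γ ^ n * ρ ^ (d - n) = (γ / ρ) ^ (n : ℤ) * ρ ^ d := by
  rw [div_zpow, zpow_natCast, zpow_natCast, div_mul_eq_mul_div, eq_div_iff (pow_ne_zero n hρ),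
    mul_assoc, ← pow_add, Nat.sub_add_cancel hn]

theorem pow_mul_pow_sub_div_pow_mul_pow_sub {K : Type*} [Field K] {γ ρ : K} (hγ : γ ≠ 0)
    (hρ : ρ ≠ 0) {a b d : ℕ} (ha : a ≤ d) (hb : b ≤ d) :
    γ ^ a * ρ ^ (d - a) / (γ ^ b * ρ ^ (d - b)) = (γ / ρ) ^ ((a : ℤ) - b) := by
  rw [pow_mul_pow_sub_eq_zpow_mul_pow hρ ha, pow_mul_pow_sub_eq_zpow_mul_pow hρ hb,
    mul_div_mul_right _ _ (pow_ne_zero d hρ), ← zpow_sub₀ (div_ne_zero hγ hρ)]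

/-- Binary flip-noise likelihood ratios: for `x, xt` at Hamming distance `s` and
`|t| ≤ s`, the level set `{x' : dist(x',x) - dist(x',xt) = t}` is nonempty iff
`t ≡ s (mod 2)`, and on it the likelihood ratio `p(x')/q(x')` equals `(γ/ρ)^t`. -/
theorem binary_likelihood_ratio (d s : ℕ) (ρ : ℝ) (hρ0 : 0 < ρ) (hρ1 : ρ < 1)
    (γ : ℝ) (hγ : γ = 1 - ρ)
    (x xt : Fin d → Fin 2) (hdist : hammingDist x xt = s)
    (t : ℤ) (ht : |t| ≤ (s : ℤ)) :
    ((∃ x' : Fin d → Fin 2, (hammingDist x' x : ℤ) - (hammingDist x' xt : ℤ) = t) ↔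
      t ≡ (s : ℤ) [ZMOD 2]) ∧
    (∀ x' : Fin d → Fin 2, (hammingDist x' x : ℤ) - (hammingDist x' xt : ℤ) = t →
      (γ ^ (hammingDist x' x) * ρ ^ (d - hammingDist x' x)) /
        (γ ^ (hammingDist x' xt) * ρ ^ (d - hammingDist x' xt)) = (γ / ρ) ^ t) := by
  refine ⟨⟨?_, fun hts => ?_⟩, fun x' hx' => ?_⟩
  · rintro ⟨x', rfl⟩
    have hpar := hammingDist_add_hammingDist_modEq_two x' x xt
    rw [Nat.ModEq] at hpar
    rw [Int.ModEq]
    omega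
  · have ht' := abs_le.mp ht
    rw [Int.ModEq] at hts
    obtain ⟨x', hx'x, hx'xt⟩ :=
      exists_hammingDist_eq_and_hammingDist_eq x xt (k := ((t + s) / 2).toNat) (by omega)
    exact ⟨x', by omega⟩
  · have hγ0 : γ ≠ 0 := hγ ▸ (sub_pos.mpr hρ1).ne'
    have hle (y z : Fin d → Fin 2) : hammingDist y z ≤ d :=
      hammingDist_le_card_fintype.trans_eq (Fintype.card_fin d)
    rw [pow_mul_pow_sub_div_pow_mul_pow_sub hγ0 hρ0.ne' (hle _ _) (hle _ _), hx']
end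

section
/- (KL-divergence certification criterion, binary classification.) Let μ and ν be probability measures on a finite set Ω and let h : Ω → {0, 1}. Suppose ∑_{o} μ(o)·h(o) = p* with p* > 1/2, and suppose the KL divergence KL(ν ‖ μ) < -(1/2)·log(4·p*·(1 - p*)). Then ∑_{o} ν(o)·h(o) > 1/2. -/
open Finset Real

/-!
Pushing `ν` and `μ` forward along `h` gives Bernoulli laws with parameters `q = ν(h = 1)` and
`p = p*`, and by the log-sum inequality this coarse-graining can only decrease the KL divergence.
If `q ≤ 1/2`, the binary divergence `kl(q‖p)` is at least `kl(1/2‖p) = -(1/2)·log(4p(1-p))`: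
its entropy part is at least `-log 2`, and its cross-entropy part `-q log p - (1-q) log (1-p)`
only grows when `q` decreases, because `log (1-p) < log p`.
-/

noncomputable def binKL (q p : ℝ) : ℝ :=
  q * log (q / p) + (1 - q) * log ((1 - q) / (1 - p))

lemma mul_log_div_eq_mul_log_sub_mul_log (x : ℝ) {y : ℝ} (hy : y ≠ 0) :
    x * log (x / y) = x * log x - x * log y := by
  rcases eq_or_ne x 0 with rfl | hx
  · simp
  · rw [log_div hx hy, mul_sub]

/-- Tangent-line bound behind the log-sum inequality: `log t ≥ 1 - t⁻¹` at `t = x / (c * y)`. -/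
lemma mul_log_add_sub_le_mul_log_div {x y c : ℝ} (hx : 0 ≤ x) (hy : 0 ≤ y)
    (hxy : y = 0 → x = 0) (hc : 0 < c) :
    x * log c + x - c * y ≤ x * log (x / y) := by
  rcases hx.eq_or_lt with rfl | hx
  · simpa using mul_nonneg hc.le hy
  have hy : 0 < y := hy.lt_of_ne fun h ↦ hx.ne' (hxy h.symm)
  have hlog := one_sub_inv_le_log_of_pos (x := x / y / c) (by positivity)
  rw [log_div (by positivity) hc.ne'] at hlog
  have hinv : x * (x / y / c)⁻¹ = c * y := by field_simp
  nlinarith [mul_le_mul_of_nonneg_left hlog hx.le]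

section LogSum

variable {ι : Type*} {s : Finset ι} {μ ν : ι → ℝ}

lemma sum_eq_zero_of_sum_eq_zero_of_abs_cont (hμ : ∀ i ∈ s, 0 ≤ μ i)
    (habs : ∀ i ∈ s, μ i = 0 → ν i = 0) (h : ∑ i ∈ s, μ i = 0) : ∑ i ∈ s, ν i = 0 :=
  sum_eq_zero fun i hi ↦ habs i hi ((sum_eq_zero_iff_of_nonneg hμ).1 h i hi)

theorem sum_mul_log_sum_div_le (hμ : ∀ i ∈ s, 0 ≤ μ i) (hν : ∀ i ∈ s, 0 ≤ ν i)
    (habs : ∀ i ∈ s, μ i = 0 → ν i = 0) :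
    (∑ i ∈ s, ν i) * log ((∑ i ∈ s, ν i) / ∑ i ∈ s, μ i) ≤ ∑ i ∈ s, ν i * log (ν i / μ i) := by
  rcases (sum_nonneg hν).eq_or_lt with hN | hN
  · have hν0 := (sum_eq_zero_iff_of_nonneg hν).1 hN.symm
    rw [← hN, zero_mul, sum_eq_zero fun i hi ↦ by rw [hν0 i hi, zero_mul]]
  have hM : 0 < ∑ i ∈ s, μ i := (sum_nonneg hμ).lt_of_ne fun hM ↦
    hN.ne' (sum_eq_zero_of_sum_eq_zero_of_abs_cont hμ habs hM.symm)
  set c := (∑ i ∈ s, ν i) / ∑ i ∈ s, μ i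
  calc (∑ i ∈ s, ν i) * log c = ∑ i ∈ s, (ν i * log c + ν i - c * μ i) := by
        rw [sum_sub_distrib, sum_add_distrib, ← sum_mul, ← mul_sum]
        simp only [c]
        field_simp
        ring
    _ ≤ ∑ i ∈ s, ν i * log (ν i / μ i) := sum_le_sum fun i hi ↦
        mul_log_add_sub_le_mul_log_div (hν i hi) (hμ i hi) (habs i hi) (by positivity)

end LogSum

theorem binKL_le_sum_mul_log_div {ι : Type*} [Fintype ι] [DecidableEq ι] (s : Finset ι)
    {μ ν : ι → ℝ} (hμ : ∀ i, 0 ≤ μ i) (hν : ∀ i, 0 ≤ ν i) (habs : ∀ i, μ i = 0 → ν i = 0)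
    (hμ1 : ∑ i, μ i = 1) (hν1 : ∑ i, ν i = 1) :
    binKL (∑ i ∈ s, ν i) (∑ i ∈ s, μ i) ≤ ∑ i, ν i * log (ν i / μ i) := by
  have hμc : ∑ i ∈ sᶜ, μ i = 1 - ∑ i ∈ s, μ i := by
    rw [← hμ1, ← sum_add_sum_compl s μ, add_sub_cancel_left]
  have hνc : ∑ i ∈ sᶜ, ν i = 1 - ∑ i ∈ s, ν i := by
    rw [← hν1, ← sum_add_sum_compl s ν, add_sub_cancel_left]
  rw [binKL, ← hμc, ← hνc, ← sum_add_sum_compl s]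
  exact add_le_add
    (sum_mul_log_sum_div_le (fun i _ ↦ hμ i) (fun i _ ↦ hν i) fun i _ ↦ habs i)
    (sum_mul_log_sum_div_le (fun i _ ↦ hμ i) (fun i _ ↦ hν i) fun i _ ↦ habs i)

theorem neg_half_log_le_binKL {q p : ℝ} (hq : q ≤ 1 / 2) (hp : 1 / 2 < p) (hp1 : p < 1) :
    -(1 / 2) * log (4 * p * (1 - p)) ≤ binKL q p := by
  have hp0 : 0 < p := by linarith
  have hp1' : 0 < 1 - p := by linarith
  have hlog4 : log (4 * p * (1 - p)) = 2 * log 2 + log p + log (1 - p) := by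
    rw [log_mul (by positivity) hp1'.ne', log_mul (by norm_num) hp0.ne',
      show (4 : ℝ) = 2 ^ 2 by norm_num, log_pow, Nat.cast_ofNat]
  have hentropy : binEntropy q = -(q * log q) - (1 - q) * log (1 - q) := by
    rw [binEntropy, log_inv, log_inv]
    ring
  have hcross : 0 ≤ (1 / 2 - q) * (log p - log (1 - p)) :=
    mul_nonneg (by linarith) (sub_nonneg.2 (log_le_log hp1' (by linarith)))
  rw [binKL, mul_log_div_eq_mul_log_sub_mul_log q hp0.ne',
    mul_log_div_eq_mul_log_sub_mul_log (1 - q) hp1'.ne', hlog4]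
  nlinarith [binEntropy_le_log_two (p := q)]

lemma sum_mul_eq_sum_filter_eq_one {ι : Type*} (s : Finset ι) (f : ι → ℝ) {h : ι → ℝ}
    (hh : ∀ i ∈ s, h i = 0 ∨ h i = 1) : ∑ i ∈ s, f i * h i = ∑ i ∈ s with h i = 1, f i := by
  rw [sum_filter]
  refine sum_congr rfl fun i hi ↦ ?_
  rcases hh i hi with h0 | h1 <;> simp [*]

/-- KL-divergence certification criterion (binary classification): if the binary
classifier `h` has `μ`-probability `p* > 1/2` of outputting `1`, and
`KL(ν‖μ) < -(1/2)·log(4 p* (1-p*))`, then the `ν`-probability of outputting `1`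
still exceeds `1/2`. -/
theorem kl_certification (Ω : Type*) [Fintype Ω] (μ ν : Ω → ℝ)
    (hμ0 : ∀ o, 0 ≤ μ o) (hν0 : ∀ o, 0 ≤ ν o)
    (hμ1 : ∑ o, μ o = 1) (hν1 : ∑ o, ν o = 1)
    (habs : ∀ o, μ o = 0 → ν o = 0)
    (h : Ω → ℝ) (hh : ∀ o, h o = 0 ∨ h o = 1)
    (pstar : ℝ) (hperf : ∑ o, μ o * h o = pstar) (hps : 1 / 2 < pstar)
    (hKL : (∑ o, if ν o = 0 then 0 else ν o * Real.log (ν o / μ o))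
      < -(1 / 2) * Real.log (4 * pstar * (1 - pstar))) :
    1 / 2 < ∑ o, ν o * h o := by
  classical
  have hKL_eq : (∑ o, if ν o = 0 then 0 else ν o * log (ν o / μ o))
      = ∑ o, ν o * log (ν o / μ o) :=
    sum_congr rfl fun o _ ↦ by split_ifs with h0 <;> simp [h0]
  rw [sum_mul_eq_sum_filter_eq_one _ _ fun o _ ↦ hh o] at hperf ⊢
  set A := univ.filter fun o ↦ h o = 1
  by_contra! hq
  have hp1 : ∑ o ∈ A, μ o < 1 := by
    by_contra! hp1
    have hμc : ∑ o ∈ Aᶜ, μ o = 0 := le_antisymm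
      (by linarith [sum_add_sum_compl A μ]) (sum_nonneg fun o _ ↦ hμ0 o)
    have hνc := sum_eq_zero_of_sum_eq_zero_of_abs_cont (fun o _ ↦ hμ0 o) (fun o _ ↦ habs o) hμc
    linarith [sum_add_sum_compl A ν]
  have hlower := neg_half_log_le_binKL hq (hperf ▸ hps) hp1
  have hupper := binKL_le_sum_mul_log_div A hμ0 hν0 habs hμ1 hν1
  rw [hperf] at hlower hupper
  linarith
end

section
/- (Single-draw KL divergence bound for bagging with flip noise, binary features.) Let n ≥ 1, 0 ≤ r ≤ n, d ≥ 1, 0 ≤ s ≤ d, ρ ∈ (1/2, 1), γ = 1 - ρ. Let D = (x₁, ..., x_n) and D̃ = (x̃₁, ..., x̃_n) be two lists of vectors in Fin d → Fin 2 such that x̃ᵢ ≠ xᵢ for at most r indices, and dist(xᵢ, x̃ᵢ) ≤ s for all i. Define the measure μ₁ on {1,...,n} × (Fin d → Fin 2) by μ₁(w, x') = (1/n) · γ^{dist(x', x_w)} ρ^{d - dist(x', x_w)}, and similarly ν₁ with x̃_w in place of x_w. Then KL(ν₁ ‖ μ₁) ≤ (r/n) · log(ρ/γ) · (ρ - γ)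 · s. -/
/-!
Both measures draw the index uniformly, so the divergence is the average over `w` of
`KL(flip x̃_w ‖ flip x_w)`, which vanishes when `x̃_w = x_w`. The log-likelihood ratio of flip
noise at `x'` is `log(ρ/γ) · (dist(x', x_w) - dist(x', x̃_w))`, and coordinatewise the flip
of `y` is at expected distance `γ · d + (ρ - γ) · dist(x, y)` from `x`. Hence every perturbed
index contributes `log(ρ/γ) (ρ - γ) dist(x_w, x̃_w) ≤ log(ρ/γ) (ρ - γ) s`.
-/

open Finset Real

theorem sum_prod_mul_eval_of_sum_eq_one {ι α R : Type*} [Fintype ι] [DecidableEq ι]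
    [Fintype α] [CommSemiring R] (w : ι → α → R) (hw : ∀ k, ∑ a, w k a = 1) (j : ι)
    (g : α → R) :
    ∑ x : ι → α, (∏ k, w k (x k)) * g (x j) = ∑ a, w j a * g a := by
  have hfactor (x : ι → α) :
      (∏ k, w k (x k)) * g (x j) = ∏ k, w k (x k) * if k = j then g (x k) else 1 := by
    rw [prod_mul_distrib, Fintype.prod_ite_eq']
  have hmarginal (k : ι) :
      ∑ a, w k a * (if k = j then g a else 1) = if k = j then ∑ a, w j a * g a else 1 := by
    split_ifs with hk
    · subst hk; rfl
    · simpa using hw k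
  rw [Fintype.sum_congr _ _ hfactor,
    ← Fintype.prod_sum (fun k a => w k a * if k = j then g a else 1)]
  simp_rw [hmarginal, Fintype.prod_ite_eq']

theorem sum_hammingDist_le_mul {ι κ β : Type*} [Fintype ι] [Fintype κ] [DecidableEq β]
    (D Dt : ι → κ → β) {r s : ℕ} (hpert : #{i | Dt i ≠ D i} ≤ r)
    (hdist : ∀ i, hammingDist (D i) (Dt i) ≤ s) :
    ∑ i, hammingDist (D i) (Dt i) ≤ r * s :=
  calc ∑ i, hammingDist (D i) (Dt i)
      = ∑ i ∈ {i | Dt i ≠ D i}, hammingDist (D i) (Dt i) := by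
        refine (sum_subset (subset_univ _) fun i _ hi => ?_).symm
        simp_all
    _ ≤ #{i | Dt i ≠ D i} * s := sum_le_card_nsmul _ _ _ fun i _ => hdist i
    _ ≤ r * s := Nat.mul_le_mul_right s hpert

section FlipNoise

variable {ι : Type*} [Fintype ι]

/-- The probability of observing `x` when each coordinate of `y` is independently kept with
probability `ρ` and flipped otherwise. -/
noncomputable def flipNoise (ρ : ℝ) (y x : ι → Fin 2) : ℝ :=
  (1 - ρ) ^ hammingDist x y * ρ ^ (Fintype.card ι - hammingDist x y)

theorem flipNoise_eq_prod (ρ : ℝ) (y x : ι → Fin 2) :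
    flipNoise ρ y x = ∏ j, if x j = y j then ρ else 1 - ρ := by
  have hagree : #{j | x j = y j} = Fintype.card ι - hammingDist x y := by
    have := card_filter_add_card_filter_not (s := univ) (fun j => x j = y j)
    rw [card_univ] at this
    simp only [hammingDist, ne_eq]
    omega
  rw [prod_ite, prod_const, prod_const, flipNoise, mul_comm, hagree]
  rfl

theorem flipNoise_pos {ρ : ℝ} (hρ0 : 0 < ρ) (hρ1 : ρ < 1) (y x : ι → Fin 2) :
    0 < flipNoise ρ y x := by
  unfold flipNoise
  have : 0 < 1 - ρ := by linarith
  positivity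

theorem log_flipNoise {ρ : ℝ} (hρ0 : 0 < ρ) (hρ1 : ρ < 1) (y x : ι → Fin 2) :
    log (flipNoise ρ y x) = Fintype.card ι * log ρ - hammingDist x y * log (ρ / (1 - ρ)) := by
  have : 0 < 1 - ρ := by linarith
  rw [flipNoise, log_mul (by positivity) (by positivity), log_pow, log_pow,
    Nat.cast_sub hammingDist_le_card_fintype, log_div hρ0.ne' this.ne']
  ring

theorem sum_flipNoise_mul_hammingDist [DecidableEq ι] (ρ : ℝ) (x y : ι → Fin 2) :
    ∑ x', flipNoise ρ y x' * hammingDist x' x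
      = (1 - ρ) * Fintype.card ι + (2 * ρ - 1) * hammingDist x y := by
  have hcoord (b c : Fin 2) : ∑ a, (if a = b then ρ else 1 - ρ) * (if a ≠ c then 1 else 0)
      = 1 - ρ + (2 * ρ - 1) * if c ≠ b then 1 else 0 := by
    fin_cases b <;> fin_cases c <;> simp [Fin.sum_univ_two] <;> ring
  have hw (k : ι) : ∑ a, (if a = y k then ρ else 1 - ρ) = 1 := by
    generalize y k = b
    fin_cases b <;> simp [Fin.sum_univ_two]
  calc ∑ x', flipNoise ρ y x' * hammingDist x' x
      = ∑ j, ∑ x' : ι → Fin 2,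
          (∏ k, if x' k = y k then ρ else 1 - ρ) * if x' j ≠ x j then 1 else 0 := by
        simp only [hammingDist, natCast_card_filter, flipNoise_eq_prod, mul_sum]
        exact sum_comm
    _ = ∑ j, (1 - ρ + (2 * ρ - 1) * if x j ≠ y j then 1 else 0) := by
        refine sum_congr rfl fun j _ => ?_
        rw [sum_prod_mul_eval_of_sum_eq_one _ hw j (fun a => if a ≠ x j then 1 else 0), hcoord]
    _ = (1 - ρ) * Fintype.card ι + (2 * ρ - 1) * hammingDist x y := by
        rw [sum_add_distrib, sum_const, card_univ, nsmul_eq_mul, ← mul_sum, hammingDist,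
          natCast_card_filter]
        ring

theorem sum_flipNoise_mul_log_div [DecidableEq ι] {ρ : ℝ} (hρ0 : 0 < ρ) (hρ1 : ρ < 1)
    (x y : ι → Fin 2) :
    ∑ x', flipNoise ρ y x' * log (flipNoise ρ y x' / flipNoise ρ x x')
      = log (ρ / (1 - ρ)) * (2 * ρ - 1) * hammingDist x y := by
  have hlog (x' : ι → Fin 2) : log (flipNoise ρ y x' / flipNoise ρ x x')
      = log (ρ / (1 - ρ)) * (hammingDist x' x - hammingDist x' y) := by
    rw [log_div (flipNoise_pos hρ0 hρ1 y x').ne' (flipNoise_pos hρ0 hρ1 x x').ne',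
      log_flipNoise hρ0 hρ1, log_flipNoise hρ0 hρ1]
    ring
  simp_rw [hlog, mul_left_comm _ (log _), ← mul_sum, mul_sub, sum_sub_distrib,
    sum_flipNoise_mul_hammingDist, hammingDist_self]
  ring

end FlipNoise

theorem single_draw_kl_bound_general (n d s r : ℕ)
    (ρ : ℝ) (hρ0 : 1 / 2 < ρ) (hρ1 : ρ < 1) (γ : ℝ) (hγ : γ = 1 - ρ)
    (D Dt : Fin n → (Fin d → Fin 2))
    (hpert : (Finset.univ.filter (fun i : Fin n => Dt i ≠ D i)).card ≤ r)
    (hdist : ∀ i : Fin n, hammingDist (D i) (Dt i) ≤ s)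
    (μ₁ ν₁ : Fin n × (Fin d → Fin 2) → ℝ)
    (hμ : ∀ w x', μ₁ (w, x') =
      (1 / n) * γ ^ (hammingDist x' (D w)) * ρ ^ (d - hammingDist x' (D w)))
    (hν : ∀ w x', ν₁ (w, x') =
      (1 / n) * γ ^ (hammingDist x' (Dt w)) * ρ ^ (d - hammingDist x' (Dt w))) :
    (∑ o : Fin n × (Fin d → Fin 2), ν₁ o * Real.log (ν₁ o / μ₁ o))
      ≤ ((r : ℝ) / n) * Real.log (ρ / γ) * (ρ - γ) * s := by
  subst hγ
  set L := log (ρ / (1 - ρ)) * (2 * ρ - 1)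
  have hL : 0 ≤ L :=
    mul_nonneg (log_nonneg ((one_le_div (by linarith)).2 (by linarith))) (by linarith)
  have hKL (w : Fin n) : ∑ x', ν₁ (w, x') * log (ν₁ (w, x') / μ₁ (w, x'))
      = 1 / n * (L * hammingDist (D w) (Dt w)) := by
    have hn : (1 / n : ℝ) ≠ 0 := by have := w.pos; positivity
    have hμ' (x' : Fin d → Fin 2) : μ₁ (w, x') = 1 / n * flipNoise ρ (D w) x' := by
      rw [hμ, flipNoise, Fintype.card_fin, mul_assoc]
    have hν' (x' : Fin d → Fin 2) : ν₁ (w, x') = 1 / n * flipNoise ρ (Dt w) x' := by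
      rw [hν, flipNoise, Fintype.card_fin, mul_assoc]
    simp_rw [hμ', hν', mul_div_mul_left _ _ hn, mul_assoc]
    rw [← mul_sum, sum_flipNoise_mul_log_div (by linarith) hρ1]
  have hsum : (∑ w, hammingDist (D w) (Dt w) : ℝ) ≤ r * s := by
    exact_mod_cast sum_hammingDist_le_mul D Dt hpert hdist
  calc ∑ o, ν₁ o * log (ν₁ o / μ₁ o)
      = 1 / n * (L * ∑ w, (hammingDist (D w) (Dt w) : ℝ)) := by
        simp_rw [Fintype.sum_prod_type, hKL, ← mul_sum]
    _ ≤ 1 / n * (L * (r * s)) := by gcongr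
    _ = r / n * log (ρ / (1 - ρ)) * (ρ - (1 - ρ)) * s := by ring

/-- Single-draw KL divergence bound for bagging with binary flip noise: if the
perturbed dataset `Dt` differs from `D` on at most `r` of the `n` examples, each in
at most `s` of the `d` binary features, then the KL divergence between the
smoothing distributions (uniform index + flip noise) is at most
`(r/n)·log(ρ/γ)·(ρ-γ)·s`. -/
theorem single_draw_kl_bound (n d s r : ℕ) (hn : 1 ≤ n) (hd : 1 ≤ d)
    (hs : s ≤ d) (hr : r ≤ n)
    (ρ : ℝ) (hρ0 : 1 / 2 < ρ) (hρ1 : ρ < 1) (γ : ℝ) (hγ : γ = 1 - ρ)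
    (D Dt : Fin n → (Fin d → Fin 2))
    (hpert : (Finset.univ.filter (fun i : Fin n => Dt i ≠ D i)).card ≤ r)
    (hdist : ∀ i : Fin n, hammingDist (D i) (Dt i) ≤ s)
    (μ₁ ν₁ : Fin n × (Fin d → Fin 2) → ℝ)
    (hμ : ∀ w x', μ₁ (w, x') =
      (1 / n) * γ ^ (hammingDist x' (D w)) * ρ ^ (d - hammingDist x' (D w)))
    (hν : ∀ w x', ν₁ (w, x') =
      (1 / n) * γ ^ (hammingDist x' (Dt w)) * ρ ^ (d - hammingDist x' (Dt w))) :
    (∑ o : Fin n × (Fin d → Fin 2), ν₁ o * Real.log (ν₁ o / μ₁ o))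
      ≤ ((r : ℝ) / n) * Real.log (ρ / γ) * (ρ - γ) * s :=
  single_draw_kl_bound_general n d s r ρ hρ0 hρ1 γ hγ D Dt hpert hdist μ₁ ν₁ hμ hν
end

section
/- (Upper-bound counterpart of the greedy Neyman–Pearson bound.) Let Ω be finite with PMFs p, q and a partition L₁, ..., L_m with constant likelihood ratios η₁ ≥ ... ≥ η_m, where ηᵢ = p(o)/q(o) for o ∈ Lᵢ. Let p' ∈ [0, 1] and let i† be the greatest index i such that ∑_{j=i}^{m} p(Lⱼ) ≥ p'. Define ub = ∑_{j=i†+1}^{m} q(Lⱼ) + (p' - ∑_{j=i†+1}^{m} p(Lⱼ)) / η_{i†}. Then for every h : Ω → [0,1] with ∑_o p(o) h(o) = p', we have ∑_o q(o) h(o) ≤ ub. -/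
open Finset

/-! With threshold `t = η idag` and `S` the union of the classes after `idag`, every outcome
satisfies `t q h ≤ t q 𝟙_S + p h - p 𝟙_S`: on `S` the likelihood ratio is at most `t` and
`h ≤ 1`, off `S` it is at least `t` and `h ≥ 0`. Summing over `Ω` gives the bound. -/

theorem sum_mul_le_of_likelihood_ratio_threshold {Ω : Type*} [Fintype Ω] [DecidableEq Ω]
    {p q h : Ω → ℝ} {t : ℝ} (ht : 0 < t) (S : Finset Ω)
    (hS : ∀ o ∈ S, p o ≤ t * q o) (hSc : ∀ o ∉ S, t * q o ≤ p o)
    (hh : ∀ o, 0 ≤ h o ∧ h o ≤ 1) :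
    ∑ o, q o * h o ≤ ∑ o ∈ S, q o + (∑ o, p o * h o - ∑ o ∈ S, p o) / t := by
  have hpoint : ∀ o, t * (q o * h o) ≤
      (if o ∈ S then t * q o else 0) + (p o * h o - if o ∈ S then p o else 0) := by
    intro o
    obtain ⟨h0, h1⟩ := hh o
    by_cases ho : o ∈ S
    · simp only [ho, if_true]
      nlinarith [hS o ho]
    · simp only [ho, if_false]
      nlinarith [hSc o ho]
  have hsum := sum_le_sum fun o (_ : o ∈ univ) => hpoint o
  rw [← mul_sum, sum_add_distrib, sum_sub_distrib, sum_ite_mem, sum_ite_mem, univ_inter,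
    ← mul_sum] at hsum
  rw [← sub_le_iff_le_add', le_div_iff₀ ht]
  linarith

theorem pairwise_disjoint_of_existsUnique_mem {α ι : Type*} {L : ι → Finset α}
    (hL : ∀ a, ∃! i, a ∈ L i) : Pairwise fun i j => Disjoint (L i) (L j) :=
  fun _ _ hij => Finset.disjoint_left.2 fun a hi hj => hij ((hL a).unique hi hj)

theorem neyman_pearson_upper_bound_general
    (Ω : Type*) [Fintype Ω] (p q : Ω → ℝ)
    (hq0 : ∀ o, 0 ≤ q o)
    (m : ℕ) (L : Fin m → Finset Ω)
    (hpart : ∀ o : Ω, ∃! i : Fin m, o ∈ L i)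
    (η : Fin m → ℝ) (hηpos : ∀ i, 0 < η i)
    (hratio : ∀ i : Fin m, ∀ o ∈ L i, p o = η i * q o)
    (hmono : ∀ i j : Fin m, i ≤ j → η j ≤ η i)
    (p' : ℝ)
    (idag : Fin m)
    (ub : ℝ)
    (hub : ub = (∑ j ∈ Finset.Ioi idag, ∑ o ∈ L j, q o) +
      (p' - ∑ j ∈ Finset.Ioi idag, ∑ o ∈ L j, p o) / η idag)
    (h : Ω → ℝ) (hh : ∀ o, 0 ≤ h o ∧ h o ≤ 1)
    (hperf : ∑ o, p o * h o = p') :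
    ∑ o, q o * h o ≤ ub := by
  classical
  set S := (Ioi idag).biUnion L
  have hdisj : (↑(Ioi idag) : Set (Fin m)).PairwiseDisjoint L :=
    (pairwise_disjoint_of_existsUnique_mem hpart).set_pairwise _
  have hS : ∀ o ∈ S, p o ≤ η idag * q o := by
    intro o ho
    obtain ⟨j, hj, hoj⟩ := mem_biUnion.1 ho
    rw [hratio j o hoj]
    exact mul_le_mul_of_nonneg_right (hmono _ _ (mem_Ioi.1 hj).le) (hq0 o)
  have hSc : ∀ o ∉ S, η idag * q o ≤ p o := by
    intro o ho
    obtain ⟨i, hoi, -⟩ := hpart o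
    have hi : i ≤ idag := not_lt.1 fun hlt => ho (mem_biUnion.2 ⟨i, mem_Ioi.2 hlt, hoi⟩)
    rw [hratio i o hoi]
    exact mul_le_mul_of_nonneg_right (hmono _ _ hi) (hq0 o)
  rw [hub, ← sum_biUnion hdisj, ← sum_biUnion hdisj, ← hperf]
  exact sum_mul_le_of_likelihood_ratio_threshold (hηpos idag) S hS hSc hh

/-- Upper-bound counterpart of the greedy Neyman–Pearson bound: any randomized
classifier `h : Ω → [0,1]` with `p`-performance exactly `p'` has `q`-performance at
most the greedy upper bound `ub` obtained by filling the subspaces of lowest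
likelihood ratio first. -/
theorem neyman_pearson_upper_bound
    (Ω : Type*) [Fintype Ω] (p q : Ω → ℝ)
    (hp0 : ∀ o, 0 ≤ p o) (hq0 : ∀ o, 0 ≤ q o)
    (hp1 : ∑ o, p o = 1) (hq1 : ∑ o, q o = 1)
    (m : ℕ) (L : Fin m → Finset Ω)
    (hpart : ∀ o : Ω, ∃! i : Fin m, o ∈ L i)
    (η : Fin m → ℝ) (hηpos : ∀ i, 0 < η i)
    (hratio : ∀ i : Fin m, ∀ o ∈ L i, p o = η i * q o)
    (hmono : ∀ i j : Fin m, i ≤ j → η j ≤ η i)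
    (p' : ℝ) (hp'0 : 0 ≤ p') (hp'1 : p' ≤ 1)
    (idag : Fin m)
    (hige : p' ≤ ∑ j ∈ Finset.Ici idag, ∑ o ∈ L j, p o)
    (higt : ∀ i : Fin m, idag < i → ∑ j ∈ Finset.Ici i, ∑ o ∈ L j, p o < p')
    (ub : ℝ)
    (hub : ub = (∑ j ∈ Finset.Ioi idag, ∑ o ∈ L j, q o) +
      (p' - ∑ j ∈ Finset.Ioi idag, ∑ o ∈ L j, p o) / η idag)
    (h : Ω → ℝ) (hh : ∀ o, 0 ≤ h o ∧ h o ≤ 1)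
    (hperf : ∑ o, p o * h o = p') :
    ∑ o, q o * h o ≤ ub :=
  neyman_pearson_upper_bound_general Ω p q hq0 m L hpart η hηpos hratio hmono p' idag ub hub h hh
    hperf
end
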